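/- Fix positive constants μ_f, L_f, L_y, M_f, ℓ_0, D, E_0 and c with 0 < c ≤ μ_f²/(8(L_f² + L_y²)); set α := 4c/μ_f, and let ρ ≥ 0 satisfy ρ² ≤ 1/(12·M_f²·(1 + 1/c) + 2). Then there exists a constant C > 0, depending only on (μ_f, L_f, L_y, M_f, ℓ_0, D, c, E_0) and not on T, with the following property. Let X ⊆ ℝ^{d1} be nonempty, closed and convex with diameter at most D, let T ≥ 1, and for each t ∈ {1,…,T}: let φ_t : ℝ^{d1} → ℝ be differentiable, μ_f-strongly convex on X, with ∇φ_t L_f-Lipschitz on X and ‖∇φ_t(x)‖ ≤ ℓ_0 for all x ∈ X; let x*_t ∈ argmin_{x ∈ X} φ_t(x) satisfy the vanishing-gradient condition ∇φ_t(x*_t) = 0; and let y*_t : ℝ^{d1} → ℝ^{d2} be L_y-Lipschitz. Suppose x_1 ∈ X, ‖y_1 − y*_1(x_1)‖ ≤ E_0, and for every t ∈ {1,…,T}: ‖y_{t+1} − y*_t(x_t)‖ ≤ ρ·‖y_t − y*_t(x_t)‖, and x_{t+1} = Π_X(x_t − α·g̃_t) for some g̃_t ∈ ℝ^{d1} with ‖g̃_t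 − ∇φ_t(x_t)‖ ≤ M_f·‖y_{t+1} − y*_t(x_t)‖. Then Σ_{t=1}^T (φ_t(x_t) − φ_t(x*_t)) ≤ C·( 1 + P_{2,T} + Y_{2,T} ). -/

import Mathlib

open Finset

section helpers
variable {E : Type*} [NormedAddCommGroup E] [InnerProductSpace ℝ E] [CompleteSpace E]

/-- first-order lower bound for a `μ`-strongly convex differentiable function. -/
lemma grad_lower {X : Set E} (hX : Convex ℝ X) {f : E → ℝ} (hf : Differentiable ℝ f) {μ : ℝ}
    (hcv : ConvexOn ℝ X (fun z => f z - μ / 2 * ‖z‖ ^ 2)) {a b : E} (ha : a ∈ X) (hb : b ∈ X) :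
    f a + (inner ℝ (gradient f a) (b - a) : ℝ) + μ / 2 * ‖b - a‖ ^ 2 ≤ f b := by
  rcases eq_or_ne a b with rfl | hab
  · simp
  set v := b - a with hv
  -- the function restricted to the segment
  set ψ : ℝ → ℝ := fun s => f (a + s • v) - μ / 2 * ‖a + s • v‖ ^ 2 with hψ
  have key : ∀ s : ℝ, (AffineMap.lineMap a b : ℝ →ᵃ[ℝ] E) s = a + s • v := by
    intro s
    rw [AffineMap.lineMap_apply_module, hv]
    module
  have hψconv : ConvexOn ℝ (Set.Icc (0:ℝ) 1) ψ := by
    have h₁ := hcv.comp_affineMap (AffineMap.lineMap a b : ℝ →ᵃ[ℝ] E)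
    have h₂ : ConvexOn ℝ (Set.Icc (0:ℝ) 1) ((fun z => f z - μ / 2 * ‖z‖ ^ 2) ∘
        (AffineMap.lineMap a b : ℝ →ᵃ[ℝ] E)) := by
      refine h₁.subset (fun s hs => ?_) (convex_Icc 0 1)
      rw [Set.mem_preimage, key]
      exact hX.add_smul_sub_mem ha hb ⟨hs.1, hs.2⟩
    convert h₂ using 1
    funext s
    simp [hψ, Function.comp, key]
  have hline : HasDerivAt (fun s : ℝ => a + s • v) v 0 := by
    simpa using ((hasDerivAt_id (0:ℝ)).smul_const v).const_add a
  have hf0 : HasDerivAt (fun s : ℝ => f (a + s • v)) ((inner ℝ (gradient f a) v : ℝ)) 0 := by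
    have hg : HasFDerivAt f (InnerProductSpace.toDual ℝ E (gradient f a)) a :=
      (hf a).hasGradientAt.hasFDerivAt
    have hg' : HasFDerivAt f (InnerProductSpace.toDual ℝ E (gradient f a)) (a + (0:ℝ) • v) := by
      simpa using hg
    have := hg'.comp_hasDerivAt 0 hline
    rw [InnerProductSpace.toDual_apply_apply] at this
    exact this
  have hq : HasDerivAt (fun s : ℝ => μ / 2 * ‖a + s • v‖ ^ 2) (μ * (inner ℝ a v : ℝ)) 0 := by
    have hfun : (fun s : ℝ => μ / 2 * ‖a + s • v‖ ^ 2)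
        = fun s => μ / 2 * (‖a‖ ^ 2 + 2 * (s * (inner ℝ a v : ℝ)) + s ^ 2 * ‖v‖ ^ 2) := by
      funext s
      rw [norm_add_sq_real, real_inner_smul_right, norm_smul]
      simp [Real.norm_eq_abs, mul_pow, sq_abs]
      try ring
    rw [hfun]
    have ha' : HasDerivAt (fun s : ℝ => 2 * (s * (inner ℝ a v : ℝ))) (2 * (inner ℝ a v : ℝ)) 0 := by
      simpa using ((hasDerivAt_id (0:ℝ)).mul_const ((inner ℝ a v : ℝ))).const_mul 2
    have hb' : HasDerivAt (fun s : ℝ => s ^ 2 * ‖v‖ ^ 2) 0 0 := by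
      simpa using (hasDerivAt_pow 2 (0:ℝ)).mul_const (‖v‖ ^ 2)
    have h1 : HasDerivAt (fun s : ℝ => ‖a‖ ^ 2 + 2 * (s * (inner ℝ a v : ℝ)) + s ^ 2 * ‖v‖ ^ 2)
        (2 * (inner ℝ a v : ℝ) + 0) 0 := by
      simpa [← add_assoc] using (ha'.add hb').const_add (‖a‖ ^ 2)
    have h2 := h1.const_mul (μ / 2)
    refine h2.congr_deriv ?_
    ring
  have hψd : HasDerivAt ψ ((inner ℝ (gradient f a) v : ℝ) - μ * (inner ℝ a v : ℝ)) 0 := hf0.sub hq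
  have hslope := hψconv.le_slope_of_hasDerivAt (by constructor <;> norm_num)
    (by constructor <;> norm_num) one_pos hψd
  rw [slope_def_field] at hslope
  have hψ1 : ψ 1 = f b - μ / 2 * ‖b‖ ^ 2 := by simp [hψ, hv]
  have hψ0 : ψ 0 = f a - μ / 2 * ‖a‖ ^ 2 := by simp [hψ]
  rw [hψ1, hψ0] at hslope
  have hb2 : ‖b - a‖ ^ 2 = ‖b‖ ^ 2 - 2 * (inner ℝ b a : ℝ) + ‖a‖ ^ 2 := norm_sub_sq_real b a
  have hav : (inner ℝ a v : ℝ) = (inner ℝ b a : ℝ) - ‖a‖ ^ 2 := by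
    rw [hv, inner_sub_right, real_inner_self_eq_norm_sq, real_inner_comm]
  rw [← hv] at hb2
  norm_num at hslope
  have h3 : μ * (inner ℝ a v : ℝ) = μ * (inner ℝ b a : ℝ) - μ * ‖a‖ ^ 2 := by rw [hav]; ring
  rw [hb2]
  have hfd : (inner ℝ (gradient f a) v : ℝ) = (fderiv ℝ f a) v := by simp
  nlinarith [hslope, h3, hfd]

/-- projection (as nearest point) onto a convex set does not increase distance to points of the
set. -/
lemma proj_dist_le {X : Set E} (hX : Convex ℝ X) {u p z : E} (hp : p ∈ X) (hz : z ∈ X)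
    (hmin : ∀ w ∈ X, ‖p - u‖ ≤ ‖w - u‖) : ‖p - z‖ ≤ ‖u - z‖ := by
  haveI : Nonempty X := ⟨⟨p, hp⟩⟩
  have hiInf : ‖u - p‖ = ⨅ w : X, ‖u - w‖ := by
    refine le_antisymm (le_ciInf fun w => ?_) (ciInf_le (f := fun w : X => ‖u - w‖) ⟨0, by rintro _ ⟨_, rfl⟩; exact norm_nonneg _⟩ ⟨p, hp⟩)
    rw [norm_sub_rev, norm_sub_rev u]
    exact hmin w w.2
  have hvar : (inner ℝ (u - p) (z - p) : ℝ) ≤ 0 :=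
    (norm_eq_iInf_iff_real_inner_le_zero hX hp).1 hiInf z hz
  have hexp : ‖u - z‖ ^ 2 = ‖u - p‖ ^ 2 - 2 * (inner ℝ (u - p) (z - p) : ℝ) + ‖z - p‖ ^ 2 := by
    have : u - z = (u - p) - (z - p) := by abel
    rw [this, norm_sub_sq_real]
  have h2 : ‖p - z‖ ^ 2 ≤ ‖u - z‖ ^ 2 := by
    rw [norm_sub_rev p z]
    nlinarith [sq_nonneg (‖u - p‖), hvar]
  nlinarith [norm_nonneg (p - z), norm_nonneg (u - z), h2]

/-- scalar Young-type inequality. -/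
lemma young_sq {r p c : ℝ} (hc : 0 < c) (hr : 0 ≤ r) (hp : 0 ≤ p) :
    (r + p) ^ 2 ≤ (1 + c) * r ^ 2 + (1 + 1 / c) * p ^ 2 := by
  have key : (1 + c) * r ^ 2 + (1 + 1 / c) * p ^ 2 - (r + p) ^ 2 = (c * r - p) ^ 2 / c := by
    field_simp
    ring
  nlinarith [div_nonneg (sq_nonneg (c * r - p)) hc.le, key]

/-- weighted Cauchy–Schwarz for four terms. -/
lemma four_sq (u0 u1 u2 u3 : ℝ) :
    (u0 + u1 + u2 + u3) ^ 2 ≤ (20 / 11) * u0 ^ 2 + 5 * u1 ^ 2 + 20 * u2 ^ 2 + 5 * u3 ^ 2 := by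
  nlinarith [sq_nonneg (4 * u0 - 11 * u1), sq_nonneg (u0 - 11 * u2), sq_nonneg (4 * u0 - 11 * u3),
    sq_nonneg (u1 - 4 * u2), sq_nonneg (u1 - u3), sq_nonneg (u3 - 4 * u2)]

end helpers

/-- coefficient bound for the `x`-error term. -/
lemma coefE {c A : ℝ} (hc : 0 < c) (hc8 : c ≤ 1/8) (hA0 : 0 ≤ A) (hA : A ≤ 5/4 * c) :
    (1 + A) * ((1 + c) * ((1 + 2*c) * (1 - 6*c))) + A ≤ 1 - c/8 := by
  nlinarith [mul_nonneg hA0 hc.le, sq_nonneg c, mul_nonneg (mul_nonneg hA0 hc.le) hc.le,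
    mul_nonneg hc.le hc.le, mul_nonneg (mul_nonneg hc.le hc.le) hc.le]

/-- coefficient bound for the `y`-error term. -/
lemma coefB {c s A : ℝ} (hc : 0 < c) (hc8 : c ≤ 1/8) (hA0 : 0 ≤ A) (hA : A ≤ 5/4 * c)
    (hs0 : 0 ≤ s) (hs : s ≤ 1/2) :
    (1 + A) * ((2*c + 1) * (c * (1 - 2*s))) + (60/11) * (s * c) ≤ 3 * ((1 - c/8) * c) := by
  nlinarith [mul_nonneg hA0 hc.le, mul_nonneg hs0 hc.le, mul_nonneg (mul_nonneg hA0 hs0) hc.le,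
    mul_nonneg (mul_nonneg hc.le hc.le) hs0, mul_nonneg hc.le hc.le,
    mul_nonneg (mul_nonneg hA0 hc.le) hc.le]


set_option maxHeartbeats 1000000 in
/-- Dynamic regret bound for the online alternating (projected) gradient method with
strongly convex outer losses under the vanishing-gradient condition `∇φ_t(x*_t) = 0`:
`BD-Regret_T = O(1 + P_{2,T} + Y_{2,T})`. -/
theorem strongly_convex_dynamic_regret_vanishing_gradient
    (μf Lf Ly Mf ℓ0 D E0 c α ρ : ℝ)
    (hμf : 0 < μf) (hLf : 0 < Lf) (hLy : 0 < Ly) (hMf : 0 < Mf)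
    (hℓ0 : 0 < ℓ0) (hD : 0 < D) (hE0 : 0 < E0)
    (hc : 0 < c) (hcle : c ≤ μf ^ 2 / (8 * (Lf ^ 2 + Ly ^ 2)))
    (hα : α = 4 * c / μf)
    (hρ0 : 0 ≤ ρ) (hρ : ρ ^ 2 ≤ 1 / (12 * Mf ^ 2 * (1 + 1 / c) + 2)) :
    ∃ C > 0, ∀ (d1 d2 T : ℕ), 1 ≤ T →
      ∀ (X : Set (EuclideanSpace ℝ (Fin d1))), X.Nonempty → IsClosed X → Convex ℝ X →
      (∀ a ∈ X, ∀ b ∈ X, ‖a - b‖ ≤ D) →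
      ∀ (φ : ℕ → EuclideanSpace ℝ (Fin d1) → ℝ)
        (xstar x : ℕ → EuclideanSpace ℝ (Fin d1))
        (ystar : ℕ → EuclideanSpace ℝ (Fin d1) → EuclideanSpace ℝ (Fin d2))
        (y : ℕ → EuclideanSpace ℝ (Fin d2))
        (g : ℕ → EuclideanSpace ℝ (Fin d1)),
      (∀ t ∈ Finset.Icc 1 T, Differentiable ℝ (φ t)) →
      -- μf-strong convexity of φ_t on X
      (∀ t ∈ Finset.Icc 1 T, ConvexOn ℝ X (fun z => φ t z - μf / 2 * ‖z‖ ^ 2)) →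
      -- Lf-Lipschitz gradient on X
      (∀ t ∈ Finset.Icc 1 T, ∀ a ∈ X, ∀ b ∈ X,
        ‖gradient (φ t) a - gradient (φ t) b‖ ≤ Lf * ‖a - b‖) →
      -- bounded gradient on X
      (∀ t ∈ Finset.Icc 1 T, ∀ a ∈ X, ‖gradient (φ t) a‖ ≤ ℓ0) →
      -- x*_t minimizes φ_t over X with vanishing gradient
      (∀ t ∈ Finset.Icc 1 T, xstar t ∈ X ∧ ∀ z ∈ X, φ t (xstar t) ≤ φ t z) →
      (∀ t ∈ Finset.Icc 1 T, gradient (φ t) (xstar t) = 0) →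
      -- y*_t is Ly-Lipschitz
      (∀ t ∈ Finset.Icc 1 T, ∀ a b, ‖ystar t a - ystar t b‖ ≤ Ly * ‖a - b‖) →
      x 1 ∈ X →
      ‖y 1 - ystar 1 (x 1)‖ ≤ E0 →
      -- inner contraction
      (∀ t ∈ Finset.Icc 1 T, ‖y (t + 1) - ystar t (x t)‖ ≤ ρ * ‖y t - ystar t (x t)‖) →
      -- approximate hypergradient and projected update
      (∀ t ∈ Finset.Icc 1 T,
        ‖g t - gradient (φ t) (x t)‖ ≤ Mf * ‖y (t + 1) - ystar t (x t)‖ ∧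
        x (t + 1) ∈ X ∧
        ∀ z ∈ X, ‖x (t + 1) - (x t - α • g t)‖ ≤ ‖z - (x t - α • g t)‖) →
      ∑ t ∈ Finset.Icc 1 T, (φ t (x t) - φ t (xstar t))
        ≤ C * (1 + (∑ t ∈ Finset.Icc 2 T, ‖xstar (t - 1) - xstar t‖ ^ 2)
            + ∑ t ∈ Finset.Icc 2 T,
                ‖ystar (t - 1) (xstar (t - 1)) - ystar t (xstar t)‖ ^ 2) := by
  -- abbreviations for the constants
  set N : ℝ := Lf ^ 2 + Ly ^ 2 with hNdef
  have hN : 0 < N := by positivity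
  set γ : ℝ := c / (4 * N) with hγdef
  have hγ0 : 0 < γ := by positivity
  set A : ℝ := 5 * Ly ^ 2 * γ with hAdef
  have hA0 : 0 ≤ A := by positivity
  set Bp : ℝ := (1 + A) * (1 + 1 / c) with hBpdef
  have hBp0 : 0 < Bp := by positivity
  set Bq : ℝ := 20 * γ with hBqdef
  have hBq0 : 0 < Bq := by positivity
  refine ⟨8 / c * Lf * (D ^ 2 + γ * E0 ^ 2 + Bp + Bq) + 1, by positivity, ?_⟩
  set C : ℝ := 8 / c * Lf * (D ^ 2 + γ * E0 ^ 2 + Bp + Bq) + 1 with hCdef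
  have hC0 : 0 < C := by positivity
  intro d1 d2 T hT X hXne hXcl hXconv hdiam φ xstar x ystar y g hdiff hconv hlip hgbd hargmin
    hgrad0 hylip hx1 hy1 hcontr hupd
  set P : ℝ := ∑ t ∈ Finset.Icc 2 T, ‖xstar (t - 1) - xstar t‖ ^ 2 with hPdef
  set Q : ℝ := ∑ t ∈ Finset.Icc 2 T, ‖ystar (t - 1) (xstar (t - 1)) - ystar t (xstar t)‖ ^ 2
    with hQdef
  have hP0 : 0 ≤ P := Finset.sum_nonneg fun i _ => by positivity
  have hQ0 : 0 ≤ Q := Finset.sum_nonneg fun i _ => by positivity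
  -- iterates stay in `X`
  have hxX : ∀ t, 1 ≤ t → t ≤ T → x t ∈ X := by
    intro t ht1 ht2
    match t, ht1 with
    | 1, _ => exact hx1
    | (s+2), _ =>
      exact (hupd (s+1) (Finset.mem_Icc.mpr (by omega))).2.1
  have hxstarX : ∀ t ∈ Finset.Icc 1 T, xstar t ∈ X := fun t ht => (hargmin t ht).1
  by_cases hsing : ∀ a ∈ X, ∀ b ∈ X, a = b
  · -- degenerate case : `X` is a single point, regret is zero
    have hz : ∑ t ∈ Finset.Icc 1 T, (φ t (x t) - φ t (xstar t)) = 0 := by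
      refine Finset.sum_eq_zero fun t ht => ?_
      have h1 := Finset.mem_Icc.mp ht
      rw [hsing (x t) (hxX t h1.1 h1.2) (xstar t) (hxstarX t ht)]
      ring
    rw [hz]
    have h1PQ : (0:ℝ) ≤ 1 + P + Q := by linarith only [hP0, hQ0]
    exact mul_nonneg hC0.le h1PQ
  · -- main case
    push_neg at hsing
    obtain ⟨a0, ha0, b0, hb0, hab0⟩ := hsing
    have h1T : (1 : ℕ) ∈ Finset.Icc 1 T := Finset.mem_Icc.mpr ⟨le_refl 1, hT⟩
    have h8N : c * (8 * N) ≤ μf ^ 2 := by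
      exact (le_div_iff₀ (by positivity)).mp hcle
    -- from the existence of two distinct points, `μf ≤ Lf`, hence `c ≤ 1/8`
    have hc8 : c ≤ 1 / 8 := by
      have L1 := grad_lower hXconv (hdiff 1 h1T) (hconv 1 h1T) ha0 hb0
      have L2 := grad_lower hXconv (hdiff 1 h1T) (hconv 1 h1T) hb0 ha0
      have hlip1 := hlip 1 h1T b0 hb0 a0 ha0
      have hba : ‖a0 - b0‖ = ‖b0 - a0‖ := norm_sub_rev _ _
      have hrev : (inner ℝ (gradient (φ 1) b0) (a0 - b0) : ℝ)
          = -(inner ℝ (gradient (φ 1) b0) (b0 - a0) : ℝ) := by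
        rw [show a0 - b0 = -(b0 - a0) by abel, inner_neg_right]
      have hpos : 0 < ‖b0 - a0‖ := by
        rw [norm_pos_iff, sub_ne_zero]; exact fun h => hab0 h.symm
      have hmono : μf * ‖b0 - a0‖ ^ 2
          ≤ (inner ℝ (gradient (φ 1) b0 - gradient (φ 1) a0) (b0 - a0) : ℝ) := by
        rw [inner_sub_left]
        rw [hba] at L2
        rw [hrev] at L2
        linarith [L1, L2]
      have hCS2 : (inner ℝ (gradient (φ 1) b0 - gradient (φ 1) a0) (b0 - a0) : ℝ)
          ≤ Lf * ‖b0 - a0‖ * ‖b0 - a0‖ := by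
        refine le_trans (real_inner_le_norm _ _) ?_
        have hlip1' : ‖gradient (φ 1) b0 - gradient (φ 1) a0‖ ≤ Lf * ‖b0 - a0‖ := hlip1
        exact mul_le_mul_of_nonneg_right hlip1' (norm_nonneg _)
      have hμL : μf ≤ Lf := by nlinarith only [hmono, hCS2, mul_pos hpos hpos]
      have hμ2 : μf ^ 2 ≤ N := by
        rw [hNdef]
        nlinarith only [hμL, hμf, sq_nonneg Ly]
      nlinarith only [h8N, hμ2, hN, hc]
    -- numeric facts
    have hα0 : 0 < α := by rw [hα]; positivity
    have hαμ : α * μf = 4 * c := by rw [hα]; field_simp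
    have hα2 : α ^ 2 * μf ^ 2 = 16 * c ^ 2 := by
      calc α ^ 2 * μf ^ 2 = (α * μf) ^ 2 := by ring
        _ = (4 * c) ^ 2 := by rw [hαμ]
        _ = 16 * c ^ 2 := by ring
    have hα2N : α ^ 2 * N ≤ 2 * c := by
      nlinarith only [hα2, mul_le_mul_of_nonneg_left h8N (sq_nonneg α), hc, hN, sq_nonneg α]
    have hαLf : α ^ 2 * Lf ^ 2 ≤ 2 * c := by
      have h1 : α ^ 2 * Lf ^ 2 ≤ α ^ 2 * N := by
        rw [hNdef]
        nlinarith only [sq_nonneg (α * Ly)]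
      linarith only [h1, hα2N]
    have hρle : ρ ^ 2 * (12 * Mf ^ 2 * (1 + 1 / c) + 2) ≤ 1 :=
      (le_div_iff₀ (by positivity)).mp hρ
    have hid : (1 + 1 / c) * c = c + 1 := by field_simp
    have h12 : 12 * (1 + c) * (Mf ^ 2 * ρ ^ 2) + 2 * (c * ρ ^ 2) ≤ c := by
      have h := mul_le_mul_of_nonneg_right hρle hc.le
      have hid2 : 12 * (Mf ^ 2 * ρ ^ 2) * ((1 + 1 / c) * c) = 12 * (Mf ^ 2 * ρ ^ 2) * (c + 1) := by
        rw [hid]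
      nlinarith only [h, hid2]
    have hρ12 : ρ ^ 2 ≤ 1 / 2 := by
      have hnn : (0:ℝ) ≤ 12 * (1 + c) * (Mf ^ 2 * ρ ^ 2) := by positivity
      nlinarith only [h12, hnn, hc]
    have hLyN : Ly ^ 2 ≤ N := by rw [hNdef]; nlinarith only [sq_nonneg Lf]
    have hA54 : A ≤ 5 / 4 * c := by
      rw [hAdef, hγdef, hNdef, ← mul_div_assoc, div_le_iff₀ (by positivity)]
      have hkey : (0:ℝ) ≤ c * Lf ^ 2 := mul_nonneg hc.le (sq_nonneg Lf)
      linarith only [hkey]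
    have hcE : (1 + A) * ((1 + c) * ((1 + 2*c) * (1 - 6*c))) + A ≤ 1 - c/8 :=
      coefE hc hc8 hA0 hA54
    have h1A : (0:ℝ) ≤ 1 + A := by linarith only [hA0]
    have hcB : (1 + A) * ((1 + c) * ((1 + 1/(2*c)) * (α^2 * (Mf^2 * ρ^2))))
        + 20/11 * (ρ^2 * γ) ≤ (1 - c/8) * γ := by
      have h12N : (0:ℝ) < 12 * N := by positivity
      refine le_of_mul_le_mul_right ?_ h12N
      have hγ12N : γ * (12 * N) = 3 * c := by rw [hγdef]; field_simp; ring
      have hKJfull : ((1 + c) * ((1 + 1/(2*c)) * (α^2 * (Mf^2 * ρ^2)))) * (12 * N)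
          ≤ (2*c+1) * (c * (1 - 2*ρ^2)) := by
        have e1 : (1 + 1/(2*c)) * (2*c) = 2*c + 1 := by field_simp
        have hKJa : ((1 + c) * ((1 + 1/(2*c)) * (α^2 * (Mf^2 * ρ^2)))) * (12 * N)
            = ((1+c) * ((1 + 1/(2*c)) * (α^2 * N))) * (12 * (Mf^2 * ρ^2)) := by ring
        have hmono2 : (1+c) * ((1 + 1/(2*c)) * (α^2 * N)) ≤ (1+c) * ((1 + 1/(2*c)) * (2*c)) := by
          have c2 : (0:ℝ) ≤ 1 + 1/(2*c) := by positivity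
          have c3 : (0:ℝ) ≤ 1 + c := by linarith only [hc]
          exact mul_le_mul_of_nonneg_left (mul_le_mul_of_nonneg_left hα2N c2) c3
        rw [e1] at hmono2
        have hKJb : ((1+c) * ((1 + 1/(2*c)) * (α^2 * N))) * (12 * (Mf^2 * ρ^2))
            ≤ ((1+c) * (2*c+1)) * (12 * (Mf^2 * ρ^2)) := by
          refine mul_le_mul_of_nonneg_right ?_ (by positivity)
          exact hmono2
        have hKJc : ((1+c) * (2*c+1)) * (12 * (Mf^2 * ρ^2)) = (2*c+1) * (12 * (1+c) * (Mf^2 * ρ^2)) := by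
          ring
        have hKJd : (2*c+1) * (12 * (1+c) * (Mf^2 * ρ^2)) ≤ (2*c+1) * (c * (1 - 2*ρ^2)) := by
          refine mul_le_mul_of_nonneg_left ?_ (by linarith only [hc])
          nlinarith only [h12]
        rw [hKJa]
        calc ((1+c) * ((1 + 1/(2*c)) * (α^2 * N))) * (12 * (Mf^2 * ρ^2))
            ≤ ((1+c) * (2*c+1)) * (12 * (Mf^2 * ρ^2)) := hKJb
          _ = (2*c+1) * (12 * (1+c) * (Mf^2 * ρ^2)) := hKJc
          _ ≤ (2*c+1) * (c * (1 - 2*ρ^2)) := hKJd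
      calc ((1 + A) * ((1 + c) * ((1 + 1/(2*c)) * (α^2 * (Mf^2 * ρ^2)))) + 20/11 * (ρ^2 * γ))
            * (12 * N)
          = (1 + A) * (((1 + c) * ((1 + 1/(2*c)) * (α^2 * (Mf^2 * ρ^2)))) * (12 * N))
            + 20/11 * ρ^2 * (γ * (12 * N)) := by ring
        _ = (1 + A) * (((1 + c) * ((1 + 1/(2*c)) * (α^2 * (Mf^2 * ρ^2)))) * (12 * N))
            + 20/11 * ρ^2 * (3 * c) := by rw [hγ12N]
        _ ≤ (1 + A) * ((2*c+1) * (c * (1 - 2*ρ^2))) + 20/11 * ρ^2 * (3 * c) := by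
            exact add_le_add_left (mul_le_mul_of_nonneg_left hKJfull h1A) _
        _ ≤ 3 * ((1 - c/8) * c) := by
            have := coefB hc hc8 hA0 hA54 (sq_nonneg ρ) hρ12
            linarith only [this]
        _ = (1 - c/8) * γ * (12 * N) := by rw [mul_assoc, hγ12N]; ring
    -- one-step Lyapunov inequality
    have hstep : ∀ t, 1 ≤ t → t + 1 ≤ T →
        ‖x (t+1) - xstar (t+1)‖^2 + γ * ‖y (t+1) - ystar (t+1) (x (t+1))‖^2
          ≤ (1 - c/8) * (‖x t - xstar t‖^2 + γ * ‖y t - ystar t (x t)‖^2)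
            + Bp * ‖xstar t - xstar (t+1)‖^2
            + Bq * ‖ystar t (xstar t) - ystar (t+1) (xstar (t+1))‖^2 := by
      intro t ht1 ht2
      have htI : t ∈ Finset.Icc 1 T := Finset.mem_Icc.mpr ⟨ht1, by omega⟩
      have ht1I : t+1 ∈ Finset.Icc 1 T := Finset.mem_Icc.mpr ⟨by omega, ht2⟩
      have hxtX : x t ∈ X := hxX t ht1 (by omega)
      have hxt1X : x (t+1) ∈ X := (hupd t htI).2.1
      have hxsX : xstar t ∈ X := (hargmin t htI).1
      have hxs1X : xstar (t+1) ∈ X := (hargmin (t+1) ht1I).1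
      -- strong monotonicity at the minimizer
      have L1 := grad_lower hXconv (hdiff t htI) (hconv t htI) hxtX hxsX
      have L2 := grad_lower hXconv (hdiff t htI) (hconv t htI) hxsX hxtX
      rw [hgrad0 t htI] at L2
      have L2' : φ t (xstar t) + μf/2 * ‖x t - xstar t‖^2 ≤ φ t (x t) := by
        simpa using L2
      have hrev : (inner ℝ (gradient (φ t) (x t)) (xstar t - x t) : ℝ)
          = -(inner ℝ (gradient (φ t) (x t)) (x t - xstar t) : ℝ) := by
        rw [show xstar t - x t = -(x t - xstar t) by abel, inner_neg_right]
      have hns : ‖xstar t - x t‖ = ‖x t - xstar t‖ := norm_sub_rev _ _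
      have mono : μf * ‖x t - xstar t‖^2
          ≤ (inner ℝ (gradient (φ t) (x t)) (x t - xstar t) : ℝ) := by
        rw [hrev, hns] at L1
        linarith only [L1, L2']
      have hgnorm : ‖gradient (φ t) (x t)‖ ≤ Lf * ‖x t - xstar t‖ := by
        have h := hlip t htI (x t) hxtX (xstar t) hxsX
        rwa [hgrad0 t htI, sub_zero] at h
      -- projected gradient step
      have hproj : ‖x (t+1) - xstar t‖ ≤ ‖(x t - α • g t) - xstar t‖ :=
        proj_dist_le hXconv hxt1X hxsX (hupd t htI).2.2
      have hdecomp : (x t - α • g t) - xstar t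
          = ((x t - xstar t) - α • (gradient (φ t) (x t)))
            - α • (g t - gradient (φ t) (x t)) := by
        rw [smul_sub]; abel
      have hu2 : ‖(x t - xstar t) - α • (gradient (φ t) (x t))‖^2
          ≤ (1 - 6*c) * ‖x t - xstar t‖^2 := by
        rw [norm_sub_sq_real, real_inner_smul_right]
        have hsm : ‖α • gradient (φ t) (x t)‖^2 = α^2 * ‖gradient (φ t) (x t)‖^2 := by
          rw [norm_smul, Real.norm_eq_abs, mul_pow, sq_abs]
        rw [hsm, real_inner_comm]
        have k1 : α * (μf * ‖x t - xstar t‖^2)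
            ≤ α * (inner ℝ (gradient (φ t) (x t)) (x t - xstar t) : ℝ) :=
          mul_le_mul_of_nonneg_left mono hα0.le
        have k2 : ‖gradient (φ t) (x t)‖^2 ≤ (Lf * ‖x t - xstar t‖)^2 :=
          pow_le_pow_left₀ (norm_nonneg _) hgnorm 2
        have k2' : α^2 * ‖gradient (φ t) (x t)‖^2 ≤ α^2 * (Lf * ‖x t - xstar t‖)^2 :=
          mul_le_mul_of_nonneg_left k2 (sq_nonneg α)
        have k3 : α^2 * (Lf * ‖x t - xstar t‖)^2 = (α^2 * Lf^2) * ‖x t - xstar t‖^2 := by ring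
        have k4 : (α^2 * Lf^2) * ‖x t - xstar t‖^2 ≤ (2*c) * ‖x t - xstar t‖^2 :=
          mul_le_mul_of_nonneg_right hαLf (sq_nonneg _)
        have k5 : α * (μf * ‖x t - xstar t‖^2) = (4*c) * ‖x t - xstar t‖^2 := by
          rw [show α * (μf * ‖x t - xstar t‖^2) = (α * μf) * ‖x t - xstar t‖^2 by ring, hαμ]
        nlinarith only [k1, k2', k3, k4, k5]
      have hwn : ‖α • (g t - gradient (φ t) (x t))‖ = α * ‖g t - gradient (φ t) (x t)‖ := by
        rw [norm_smul, Real.norm_eq_abs, abs_of_pos hα0]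
      have hr1 : ‖x (t+1) - xstar t‖
          ≤ ‖(x t - xstar t) - α • (gradient (φ t) (x t))‖
            + ‖α • (g t - gradient (φ t) (x t))‖ := by
        rw [hdecomp] at hproj
        exact le_trans hproj (norm_sub_le _ _)
      have hr2 : ‖x (t+1) - xstar t‖^2
          ≤ (1+2*c) * ‖(x t - xstar t) - α • (gradient (φ t) (x t))‖^2
            + (1+1/(2*c)) * ‖α • (g t - gradient (φ t) (x t))‖^2 := by
        have hy := young_sq (by positivity : (0:ℝ) < 2*c)
          (norm_nonneg ((x t - xstar t) - α • (gradient (φ t) (x t))))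
          (norm_nonneg (α • (g t - gradient (φ t) (x t))))
        have hsq := pow_le_pow_left₀ (norm_nonneg _) hr1 2
        linarith only [hy, hsq]
      have hdd : ‖g t - gradient (φ t) (x t)‖ ≤ Mf * (ρ * ‖y t - ystar t (x t)‖) := by
        refine le_trans (hupd t htI).1 ?_
        exact mul_le_mul_of_nonneg_left (hcontr t htI) hMf.le
      have hdd2 : ‖g t - gradient (φ t) (x t)‖^2
          ≤ Mf^2 * (ρ^2 * ‖y t - ystar t (x t)‖^2) := by
        calc ‖g t - gradient (φ t) (x t)‖^2
            ≤ (Mf * (ρ * ‖y t - ystar t (x t)‖))^2 := pow_le_pow_left₀ (norm_nonneg _) hdd 2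
          _ = Mf^2 * (ρ^2 * ‖y t - ystar t (x t)‖^2) := by ring
      have hE2a : ‖x (t+1) - xstar (t+1)‖ ≤ ‖x (t+1) - xstar t‖ + ‖xstar t - xstar (t+1)‖ := by
        rw [show x (t+1) - xstar (t+1) = (x (t+1) - xstar t) + (xstar t - xstar (t+1)) by abel]
        exact norm_add_le _ _
      have hE2 : ‖x (t+1) - xstar (t+1)‖^2
          ≤ (1+c) * ‖x (t+1) - xstar t‖^2 + (1+1/c) * ‖xstar t - xstar (t+1)‖^2 := by
        have hy := young_sq hc (norm_nonneg (x (t+1) - xstar t)) (norm_nonneg (xstar t - xstar (t+1)))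
        have hsq := pow_le_pow_left₀ (norm_nonneg _) hE2a 2
        linarith only [hy, hsq]
      have Ex : ‖x (t+1) - xstar (t+1)‖^2
          ≤ (1+c) * ((1+2*c) * (1-6*c)) * ‖x t - xstar t‖^2
            + (1+c) * ((1+1/(2*c)) * (α^2 * (Mf^2 * (ρ^2 * ‖y t - ystar t (x t)‖^2))))
            + (1+1/c) * ‖xstar t - xstar (t+1)‖^2 := by
        have c1 : (0:ℝ) ≤ 1+2*c := by linarith only [hc]
        have c2 : (0:ℝ) ≤ 1+1/(2*c) := by positivity
        have c3 : (0:ℝ) ≤ 1+c := by linarith only [hc]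
        have m1 := mul_le_mul_of_nonneg_left hu2 c1
        have hw2 : ‖α • (g t - gradient (φ t) (x t))‖^2
            = α^2 * ‖g t - gradient (φ t) (x t)‖^2 := by rw [hwn]; ring
        have m2 : ‖α • (g t - gradient (φ t) (x t))‖^2
            ≤ α^2 * (Mf^2 * (ρ^2 * ‖y t - ystar t (x t)‖^2)) := by
          rw [hw2]
          exact mul_le_mul_of_nonneg_left hdd2 (sq_nonneg α)
        have m2' := mul_le_mul_of_nonneg_left m2 c2
        have m3 : ‖x (t+1) - xstar t‖^2
            ≤ (1+2*c) * ((1-6*c) * ‖x t - xstar t‖^2)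
              + (1+1/(2*c)) * (α^2 * (Mf^2 * (ρ^2 * ‖y t - ystar t (x t)‖^2))) := by
          linarith only [hr2, m1, m2']
        have m4 := mul_le_mul_of_nonneg_left m3 c3
        nlinarith only [hE2, m4]
      -- y-error recursion
      have By2 : ‖y (t+1) - ystar (t+1) (x (t+1))‖
          ≤ ρ * ‖y t - ystar t (x t)‖ + Ly * ‖x t - xstar t‖
            + ‖ystar t (xstar t) - ystar (t+1) (xstar (t+1))‖
            + Ly * ‖x (t+1) - xstar (t+1)‖ := by
        have split : y (t+1) - ystar (t+1) (x (t+1))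
            = (y (t+1) - ystar t (x t)) + ((ystar t (x t) - ystar t (xstar t))
              + ((ystar t (xstar t) - ystar (t+1) (xstar (t+1)))
                + (ystar (t+1) (xstar (t+1)) - ystar (t+1) (x (t+1))))) := by abel
        have h1 := hcontr t htI
        have h2 := hylip t htI (x t) (xstar t)
        have h4' := hylip (t+1) ht1I (xstar (t+1)) (x (t+1))
        rw [norm_sub_rev (xstar (t+1))] at h4'
        have hx4 : ‖ystar (t+1) (xstar (t+1)) - ystar (t+1) (x (t+1))‖
            ≤ Ly * ‖x (t+1) - xstar (t+1)‖ := h4'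
        have hchain := le_trans (by rw [split]; exact norm_add_le _ _ :
          ‖y (t+1) - ystar (t+1) (x (t+1))‖ ≤ ‖y (t+1) - ystar t (x t)‖
            + ‖(ystar t (x t) - ystar t (xstar t))
              + ((ystar t (xstar t) - ystar (t+1) (xstar (t+1)))
                + (ystar (t+1) (xstar (t+1)) - ystar (t+1) (x (t+1))))‖)
          (add_le_add h1 (le_trans (norm_add_le _ _)
            (add_le_add h2 (le_trans (norm_add_le _ _)
              (add_le_add (le_refl _) hx4)))))
        have h2' : ‖x t - xstar t‖ = ‖x t - xstar t‖ := rfl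
        linarith only [hchain]
      have Bsq : ‖y (t+1) - ystar (t+1) (x (t+1))‖^2
          ≤ 20/11 * (ρ^2 * ‖y t - ystar t (x t)‖^2) + 5 * (Ly^2 * ‖x t - xstar t‖^2)
            + 20 * ‖ystar t (xstar t) - ystar (t+1) (xstar (t+1))‖^2
            + 5 * (Ly^2 * ‖x (t+1) - xstar (t+1)‖^2) := by
        have hs := pow_le_pow_left₀ (norm_nonneg _) By2 2
        have h4 := four_sq (ρ * ‖y t - ystar t (x t)‖) (Ly * ‖x t - xstar t‖)
          (‖ystar t (xstar t) - ystar (t+1) (xstar (t+1))‖) (Ly * ‖x (t+1) - xstar (t+1)‖)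
        nlinarith only [hs, h4]
      -- assemble the step inequality
      have T1 := mul_le_mul_of_nonneg_left Bsq hγ0.le
      have T2 := mul_le_mul_of_nonneg_left Ex h1A
      have T3 := mul_le_mul_of_nonneg_right hcE (sq_nonneg ‖x t - xstar t‖)
      have T4 := mul_le_mul_of_nonneg_right hcB (sq_nonneg ‖y t - ystar t (x t)‖)
      rw [hAdef] at T2 T3 T4
      rw [hBpdef, hBqdef, hAdef]
      nlinarith only [T1, T2, T3, T4]
    -- summation
    have hshift : ∀ f : ℕ → ℝ,
        ∑ t ∈ Finset.Icc 2 T, f t = ∑ t ∈ Finset.Icc 1 (T-1), f (t+1) := by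
      intro f
      have hIcc : Finset.Icc 2 T = Finset.map (addLeftEmbedding 1) (Finset.Icc 1 (T-1)) := by
        rw [Finset.map_add_left_Icc]
        congr 1 <;> omega
      rw [hIcc, Finset.sum_map]
      refine Finset.sum_congr rfl fun i _ => ?_
      simp [addLeftEmbedding_apply, Nat.add_comm]
    have hsplit : ∑ t ∈ Finset.Icc 1 T, (‖x t - xstar t‖^2 + γ * ‖y t - ystar t (x t)‖^2)
        = (‖x 1 - xstar 1‖^2 + γ * ‖y 1 - ystar 1 (x 1)‖^2)
          + ∑ t ∈ Finset.Icc 2 T, (‖x t - xstar t‖^2 + γ * ‖y t - ystar t (x t)‖^2) := by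
      have h : Finset.Icc 1 T = insert 1 (Finset.Icc 2 T) := by
        ext z
        simp only [Finset.mem_Icc, Finset.mem_insert]
        omega
      rw [h, Finset.sum_insert (by simp [Finset.mem_Icc])]
    set S : ℝ := ∑ t ∈ Finset.Icc 1 T, (‖x t - xstar t‖^2 + γ * ‖y t - ystar t (x t)‖^2)
      with hSdef
    have hS0 : 0 ≤ S := Finset.sum_nonneg fun i _ => by positivity
    have hsum2 : ∑ t ∈ Finset.Icc 2 T, (‖x t - xstar t‖^2 + γ * ‖y t - ystar t (x t)‖^2)
        ≤ (1 - c/8) * S + Bp * P + Bq * Q := by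
      rw [hshift (fun t => ‖x t - xstar t‖^2 + γ * ‖y t - ystar t (x t)‖^2)]
      have hb : ∑ t ∈ Finset.Icc 1 (T-1),
            (‖x (t+1) - xstar (t+1)‖^2 + γ * ‖y (t+1) - ystar (t+1) (x (t+1))‖^2)
          ≤ ∑ t ∈ Finset.Icc 1 (T-1),
            ((1 - c/8) * (‖x t - xstar t‖^2 + γ * ‖y t - ystar t (x t)‖^2)
              + Bp * ‖xstar t - xstar (t+1)‖^2
              + Bq * ‖ystar t (xstar t) - ystar (t+1) (xstar (t+1))‖^2) := by
        refine Finset.sum_le_sum fun i hi => ?_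
        have hm := Finset.mem_Icc.mp hi
        exact hstep i hm.1 (by omega)
      have eRHS : ∑ t ∈ Finset.Icc 1 (T-1),
            ((1 - c/8) * (‖x t - xstar t‖^2 + γ * ‖y t - ystar t (x t)‖^2)
              + Bp * ‖xstar t - xstar (t+1)‖^2
              + Bq * ‖ystar t (xstar t) - ystar (t+1) (xstar (t+1))‖^2)
          = (∑ t ∈ Finset.Icc 1 (T-1),
              ((1 - c/8) * (‖x t - xstar t‖^2 + γ * ‖y t - ystar t (x t)‖^2)))
            + (∑ t ∈ Finset.Icc 1 (T-1), Bp * ‖xstar t - xstar (t+1)‖^2)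
            + (∑ t ∈ Finset.Icc 1 (T-1),
              Bq * ‖ystar t (xstar t) - ystar (t+1) (xstar (t+1))‖^2) := by
        rw [Finset.sum_add_distrib, Finset.sum_add_distrib]
      have eV : (1 - c/8) * (∑ t ∈ Finset.Icc 1 (T-1),
            (‖x t - xstar t‖^2 + γ * ‖y t - ystar t (x t)‖^2))
          = ∑ t ∈ Finset.Icc 1 (T-1),
            ((1 - c/8) * (‖x t - xstar t‖^2 + γ * ‖y t - ystar t (x t)‖^2)) := by
        rw [Finset.mul_sum]
      have eP : Bp * (∑ t ∈ Finset.Icc 1 (T-1), ‖xstar t - xstar (t+1)‖^2)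
          = ∑ t ∈ Finset.Icc 1 (T-1), Bp * ‖xstar t - xstar (t+1)‖^2 := by
        rw [Finset.mul_sum]
      have eQ : Bq * (∑ t ∈ Finset.Icc 1 (T-1),
            ‖ystar t (xstar t) - ystar (t+1) (xstar (t+1))‖^2)
          = ∑ t ∈ Finset.Icc 1 (T-1), Bq * ‖ystar t (xstar t) - ystar (t+1) (xstar (t+1))‖^2 := by
        rw [Finset.mul_sum]
      have hVsub : ∑ t ∈ Finset.Icc 1 (T-1), (‖x t - xstar t‖^2 + γ * ‖y t - ystar t (x t)‖^2)
          ≤ S := by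
        rw [hSdef]
        exact Finset.sum_le_sum_of_subset_of_nonneg
          (Finset.Icc_subset_Icc_right (by omega)) (fun i _ _ => by positivity)
      have hc8' : (0:ℝ) ≤ 1 - c/8 := by linarith only [hc8]
      have hP' : ∑ t ∈ Finset.Icc 1 (T-1), ‖xstar t - xstar (t+1)‖^2 = P := by
        rw [hPdef, hshift (fun t => ‖xstar (t-1) - xstar t‖^2)]
        refine Finset.sum_congr rfl fun i _ => ?_
        simp
      have hQ' : ∑ t ∈ Finset.Icc 1 (T-1),
          ‖ystar t (xstar t) - ystar (t+1) (xstar (t+1))‖^2 = Q := by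
        rw [hQdef, hshift (fun t => ‖ystar (t-1) (xstar (t-1)) - ystar t (xstar t)‖^2)]
        refine Finset.sum_congr rfl fun i _ => ?_
        simp
      have hmul := mul_le_mul_of_nonneg_left hVsub hc8'
      have eP2 : Bp * (∑ t ∈ Finset.Icc 1 (T-1), ‖xstar t - xstar (t+1)‖^2) = Bp * P := by
        rw [hP']
      have eQ2 : Bq * (∑ t ∈ Finset.Icc 1 (T-1),
          ‖ystar t (xstar t) - ystar (t+1) (xstar (t+1))‖^2) = Bq * Q := by
        rw [hQ']
      linarith only [hb, hmul, eRHS, eV, eP, eQ, eP2, eQ2]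
    have hV1 : ‖x 1 - xstar 1‖^2 + γ * ‖y 1 - ystar 1 (x 1)‖^2 ≤ D^2 + γ * E0^2 := by
      have h1 : ‖x 1 - xstar 1‖ ≤ D := hdiam (x 1) hx1 (xstar 1) (hxstarX 1 h1T)
      have h2 : ‖x 1 - xstar 1‖^2 ≤ D^2 := pow_le_pow_left₀ (norm_nonneg _) h1 2
      have h3 : ‖y 1 - ystar 1 (x 1)‖^2 ≤ E0^2 := pow_le_pow_left₀ (norm_nonneg _) hy1 2
      have h4 := mul_le_mul_of_nonneg_left h3 hγ0.le
      linarith only [h2, h4]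
    have hSbound : S ≤ 8/c * (D^2 + γ * E0^2 + Bp * P + Bq * Q) := by
      have hx : S = (‖x 1 - xstar 1‖^2 + γ * ‖y 1 - ystar 1 (x 1)‖^2)
          + ∑ t ∈ Finset.Icc 2 T, (‖x t - xstar t‖^2 + γ * ‖y t - ystar t (x t)‖^2) :=
        hSdef.trans hsplit
      have h8 : c/8 * S ≤ D^2 + γ * E0^2 + Bp * P + Bq * Q := by
        linarith only [hx, hsum2, hV1]
      have h9 := mul_le_mul_of_nonneg_left h8 (by positivity : (0:ℝ) ≤ 8/c)
      have hcc : (8:ℝ)/c * (c/8) = 1 := by field_simp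
      calc S = (8/c * (c/8)) * S := by rw [hcc, one_mul]
        _ = 8/c * (c/8 * S) := by ring
        _ ≤ 8/c * (D^2 + γ * E0^2 + Bp * P + Bq * Q) := h9
    -- per-round regret bound
    have hreg : ∀ t ∈ Finset.Icc 1 T, φ t (x t) - φ t (xstar t)
        ≤ Lf * (‖x t - xstar t‖^2 + γ * ‖y t - ystar t (x t)‖^2) := by
      intro t ht
      have hm := Finset.mem_Icc.mp ht
      have hxtX := hxX t hm.1 hm.2
      have hxsX := (hargmin t ht).1
      have L1 := grad_lower hXconv (hdiff t ht) (hconv t ht) hxtX hxsX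
      have hgnorm : ‖gradient (φ t) (x t)‖ ≤ Lf * ‖x t - xstar t‖ := by
        have h := hlip t ht (x t) hxtX (xstar t) hxsX
        rwa [hgrad0 t ht, sub_zero] at h
      have hrev : (inner ℝ (gradient (φ t) (x t)) (xstar t - x t) : ℝ)
          = -(inner ℝ (gradient (φ t) (x t)) (x t - xstar t) : ℝ) := by
        rw [show xstar t - x t = -(x t - xstar t) by abel, inner_neg_right]
      have hns : ‖xstar t - x t‖ = ‖x t - xstar t‖ := norm_sub_rev _ _
      rw [hrev, hns] at L1
      have hCS : (inner ℝ (gradient (φ t) (x t)) (x t - xstar t) : ℝ)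
          ≤ (Lf * ‖x t - xstar t‖) * ‖x t - xstar t‖ := by
        refine le_trans (real_inner_le_norm _ _) ?_
        exact mul_le_mul_of_nonneg_right hgnorm (norm_nonneg _)
      have hnn : (0:ℝ) ≤ μf/2 * ‖x t - xstar t‖^2 := by positivity
      have hnn2 : (0:ℝ) ≤ Lf * (γ * ‖y t - ystar t (x t)‖^2) := by positivity
      nlinarith only [L1, hCS, hnn, hnn2]
    have hfinal : ∑ t ∈ Finset.Icc 1 T, (φ t (x t) - φ t (xstar t)) ≤ Lf * S := by
      rw [hSdef, Finset.mul_sum]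
      exact Finset.sum_le_sum hreg
    -- conclusion
    have hnn3 : (0:ℝ) ≤ 8/c * Lf := by positivity
    have key1 : 8/c * Lf * (D^2 + γ * E0^2) ≤ C := by
      rw [hCdef]
      have h := mul_nonneg hnn3 (by positivity : (0:ℝ) ≤ Bp + Bq)
      nlinarith only [h, hnn3]
    have key2 : 8/c * Lf * Bp ≤ C := by
      rw [hCdef]
      have h := mul_nonneg hnn3 (by positivity : (0:ℝ) ≤ D^2 + γ * E0^2 + Bq)
      nlinarith only [h, hnn3]
    have key3 : 8/c * Lf * Bq ≤ C := by
      rw [hCdef]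
      have h := mul_nonneg hnn3 (by positivity : (0:ℝ) ≤ D^2 + γ * E0^2 + Bp)
      nlinarith only [h, hnn3]
    have hLfS := mul_le_mul_of_nonneg_left hSbound hLf.le
    have kk2 := mul_le_mul_of_nonneg_right key2 hP0
    have kk3 := mul_le_mul_of_nonneg_right key3 hQ0
    calc ∑ t ∈ Finset.Icc 1 T, (φ t (x t) - φ t (xstar t))
        ≤ Lf * S := hfinal
      _ ≤ Lf * (8/c * (D^2 + γ * E0^2 + Bp * P + Bq * Q)) := hLfS
      _ = 8/c * Lf * (D^2 + γ * E0^2) + (8/c * Lf * Bp) * P + (8/c * Lf * Bq) * Q := by ring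
      _ ≤ C * (1 + P + Q) := by nlinarith only [key1, kk2, kk3]
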